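/- For every d > 0, the limit as n → ∞ of ∫₀^d (1 - x²/R_n²)^{(n-1)/2} dx equals ∫₀^d exp(-π e x²) dx. -/

import Mathlib

/-!
Stirling's formula, transported from factorials to `Γ` by monotonicity, gives
`log Γ(x + 1) = x log x - x + o(x)`, hence `n / R_n² → 2πe`. The integrand is
`(1 + g_n)^{a_n}` with `a_n = (n - 1)/2` and `a_n g_n → -πe x²`, so it tends to
`exp (-πe x²)` pointwise; it is bounded by `1` as soon as `R_n ≥ |d|`, and dominated
convergence concludes.
-/

open Real Filter

/-- The radius of the `n`-dimensional Euclidean ball of unit volume. -/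
noncomputable def unitBallRadius (n : ℕ) : ℝ :=
  (Real.Gamma ((n : ℝ) / 2 + 1)) ^ ((1 : ℝ) / n) / Real.sqrt π

open scoped Topology Nat

theorem tendsto_one_add_rpow_exp_of_tendsto_mul {α : Type*} {l : Filter α} {a g : α → ℝ} {t : ℝ}
    (hg : Tendsto g l (𝓝 0)) (hag : Tendsto (fun i => a i * g i) l (𝓝 t)) :
    Tendsto (fun i => (1 + g i) ^ a i) l (𝓝 (exp t)) := by
  -- `log (1 + u) = u * dslope f 0 u`, and `dslope f 0` is continuous at `0` with value `f' 0 = 1`.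
  set f : ℝ → ℝ := fun u => log (1 + u)
  have hf : HasDerivAt f 1 0 := by
    simpa [f] using ((hasDerivAt_id (0 : ℝ)).const_add 1).log (by norm_num)
  have hslope : Tendsto (fun i => dslope f 0 (g i)) l (𝓝 1) := by
    have := (continuousAt_dslope_same.2 hf.differentiableAt).tendsto.comp hg
    rwa [dslope_same, hf.deriv] at this
  have hlog : Tendsto (fun i => a i * log (1 + g i)) l (𝓝 t) := by
    refine (mul_one t ▸ hag.mul hslope).congr fun i => ?_
    have := sub_smul_dslope f 0 (g i)
    simp only [f, sub_zero, add_zero, log_one, smul_eq_mul] at this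
    rw [mul_assoc, this]
  refine ((continuous_exp.tendsto t).comp hlog).congr' ?_
  filter_upwards [hg.eventually (eventually_gt_nhds (neg_lt_zero.2 one_pos))] with i hi
  rw [Function.comp_apply, rpow_def_of_pos (by linarith), mul_comm]

theorem tendsto_log_factorial_div_sub_log :
    Tendsto (fun k : ℕ => log k ! / k - log k) atTop (𝓝 (-1)) := by
  have hstirling : Tendsto (fun k : ℕ => log (Stirling.stirlingSeq k) / k) atTop (𝓝 0) :=
    ((continuousAt_log (by positivity)).tendsto.comp
      Stirling.tendsto_stirlingSeq_sqrt_pi).div_atTop tendsto_natCast_atTop_atTop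
  have hlog : Tendsto (fun k : ℕ => log (2 * k) / (2 * k)) atTop (𝓝 0) := by
    simpa [Function.comp_def] using (tendsto_pow_log_div_mul_add_atTop 1 0 1 one_ne_zero).comp
      (tendsto_natCast_atTop_atTop.const_mul_atTop two_pos)
  have hsum := hstirling.add (hlog.sub_const 1)
  rw [zero_add, zero_sub] at hsum
  refine hsum.congr' ?_
  filter_upwards [eventually_ne_atTop 0] with k hk
  have hk' : (k : ℝ) ≠ 0 := Nat.cast_ne_zero.2 hk
  rw [Stirling.log_stirlingSeq_formula, log_div hk' (exp_ne_zero 1), log_exp]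
  field_simp
  ring

theorem tendsto_log_nat_add_one_div_add (c : ℝ) :
    Tendsto (fun m : ℕ => log (m + 1) / (m + c)) atTop (𝓝 0) := by
  have h := (tendsto_pow_log_div_mul_add_atTop 1 (c - 1) 1 one_ne_zero).comp
    (tendsto_natCast_atTop_atTop.atTop_add (tendsto_const_nhds (x := (1 : ℝ))))
  refine h.congr fun m => ?_
  simp only [Function.comp_apply, pow_one, one_mul]
  ring_nf

theorem log_Gamma_add_one_div_sub_log_mem_Icc {x : ℝ} {m : ℕ} (hm : 1 ≤ m) (hmx : (m : ℝ) ≤ x)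
    (hxm : x ≤ m + 1) :
    log (Gamma (x + 1)) / x - log x ∈ Set.Icc
      (log ((m + 1)! : ℝ) / (m + 1) - log (m + 1) - log (m + 1) / (m + 1))
      (log (m ! : ℝ) / m - log m + log (m + 1) / m) := by
  have hm' : (1 : ℝ) ≤ m := by exact_mod_cast hm
  have hx : 0 < x := by linarith
  have hmono := Gamma_strictMonoOn_Ici.monotoneOn (s := Set.Ici 2)
  have hlow : (m ! : ℝ) ≤ Gamma (x + 1) := by
    rw [← Gamma_nat_eq_factorial]
    exact hmono (Set.mem_Ici.2 (by linarith)) (Set.mem_Ici.2 (by linarith)) (by linarith)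
  have hupp : Gamma (x + 1) ≤ ((m + 1)! : ℝ) := by
    rw [← Gamma_nat_eq_factorial]
    exact hmono (Set.mem_Ici.2 (by linarith)) (Set.mem_Ici.2 (by push_cast; linarith))
      (by push_cast; linarith)
  have hfac : log ((m + 1)! : ℝ) = log (m + 1) + log (m ! : ℝ) := by
    rw [Nat.factorial_succ, Nat.cast_mul, log_mul (by positivity) (by positivity)]
    push_cast; rfl
  have hfac0 : 0 ≤ log (m ! : ℝ) := log_nonneg (Nat.one_le_cast.2 m.factorial_pos)
  have hG₁ : log (m ! : ℝ) ≤ log (Gamma (x + 1)) := log_le_log (by positivity) hlow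
  have hG₂ : log (Gamma (x + 1)) ≤ log ((m + 1)! : ℝ) :=
    log_le_log (Gamma_pos_of_pos (by linarith)) hupp
  have hlogx₁ : log m ≤ log x := log_le_log (by linarith) hmx
  have hlogx₂ : log x ≤ log (m + 1) := log_le_log hx hxm
  constructor
  · have : log (m ! : ℝ) / (m + 1) ≤ log (Gamma (x + 1)) / x :=
      div_le_div₀ (by linarith) hG₁ hx hxm
    rw [hfac]
    have e : (log (m + 1) + log (m ! : ℝ)) / (m + 1) - log (m + 1) - log (m + 1) / (m + 1)
        = log (m ! : ℝ) / (m + 1) - log (m + 1) := by field_simp; ring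
    linarith
  · have : log (Gamma (x + 1)) / x ≤ log ((m + 1)! : ℝ) / m :=
      div_le_div₀ (by linarith) hG₂ (by linarith) hmx
    rw [hfac] at this
    have e : (log (m + 1) + log (m ! : ℝ)) / m = log (m ! : ℝ) / m + log (m + 1) / m := by ring
    linarith

theorem tendsto_log_Gamma_add_one_div_sub_log :
    Tendsto (fun x : ℝ => log (Gamma (x + 1)) / x - log x) atTop (𝓝 (-1)) := by
  have hlower : Tendsto (fun m : ℕ => log ((m + 1)! : ℝ) / (m + 1) - log (m + 1)
      - log (m + 1) / (m + 1)) atTop (𝓝 (-1)) := by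
    simpa using (tendsto_log_factorial_div_sub_log.comp (tendsto_add_atTop_nat 1)).sub
      (tendsto_log_nat_add_one_div_add 1)
  have hupper : Tendsto (fun m : ℕ => log (m ! : ℝ) / m - log m + log (m + 1) / m) atTop
      (𝓝 (-1)) := by
    simpa using tendsto_log_factorial_div_sub_log.add (tendsto_log_nat_add_one_div_add 0)
  have hbounds : ∀ᶠ x : ℝ in atTop, log (Gamma (x + 1)) / x - log x ∈ Set.Icc
      (log ((⌊x⌋₊ + 1)! : ℝ) / (⌊x⌋₊ + 1) - log (⌊x⌋₊ + 1) - log (⌊x⌋₊ + 1) / (⌊x⌋₊ + 1))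
      (log (⌊x⌋₊ ! : ℝ) / ⌊x⌋₊ - log ⌊x⌋₊ + log (⌊x⌋₊ + 1) / ⌊x⌋₊) := by
    filter_upwards [eventually_ge_atTop 1] with x hx
    exact log_Gamma_add_one_div_sub_log_mem_Icc (Nat.le_floor (by simpa using hx))
      (Nat.floor_le (by linarith)) (Nat.lt_floor_add_one x).le
  exact tendsto_of_tendsto_of_tendsto_of_le_of_le' (hlower.comp tendsto_nat_floor_atTop)
    (hupper.comp tendsto_nat_floor_atTop) (hbounds.mono fun _ h => h.1)
    (hbounds.mono fun _ h => h.2)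

theorem nat_div_unitBallRadius_sq {n : ℕ} (hn : n ≠ 0) :
    n / unitBallRadius n ^ 2 =
      2 * π * exp (-(log (Gamma ((n / 2 : ℝ) + 1)) / (n / 2 : ℝ) - log (n / 2 : ℝ))) := by
  have hG : 0 < Gamma ((n : ℝ) / 2 + 1) := Gamma_pos_of_pos (by positivity)
  rw [unitBallRadius, div_pow, sq_sqrt pi_pos.le, rpow_def_of_pos hG, ← exp_nat_mul, exp_neg,
    exp_sub, exp_log (by positivity)]
  field_simp
  ring_nf

theorem tendsto_nat_div_unitBallRadius_sq :
    Tendsto (fun n : ℕ => n / unitBallRadius n ^ 2) atTop (𝓝 (2 * π * exp 1)) := by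
  have h := (tendsto_log_Gamma_add_one_div_sub_log.comp
    (tendsto_natCast_atTop_atTop.atTop_div_const two_pos)).neg
  rw [neg_neg] at h
  refine (((continuous_exp.tendsto _).comp h).const_mul (2 * π)).congr' ?_
  filter_upwards [eventually_ne_atTop 0] with n hn
  exact (nat_div_unitBallRadius_sq hn).symm

theorem tendsto_unitBallRadius_sq_atTop :
    Tendsto (fun n : ℕ => unitBallRadius n ^ 2) atTop atTop := by
  refine (tendsto_natCast_atTop_atTop.atTop_mul_pos (by positivity)
    (tendsto_nat_div_unitBallRadius_sq.inv₀ (by positivity))).congr' ?_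
  filter_upwards [eventually_ne_atTop 0] with n hn
  rw [← div_eq_mul_inv, div_div_cancel₀ (Nat.cast_ne_zero.2 hn)]

/-- Up to normalization, the `(n - 1)`-volume of the section of the unit-volume `n`-ball by a
hyperplane at distance `x` from its centre. -/
noncomputable def slabDensity (n : ℕ) (x : ℝ) : ℝ :=
  (1 - x ^ 2 / unitBallRadius n ^ 2) ^ (((n : ℝ) - 1) / 2)

theorem continuous_slabDensity {n : ℕ} (hn : 1 ≤ n) : Continuous (slabDensity n) :=
  (by fun_prop : Continuous fun x : ℝ => 1 - x ^ 2 / unitBallRadius n ^ 2).rpow_const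
    fun _ => Or.inr (by rw [le_div_iff₀ two_pos]; simpa using hn)

theorem abs_slabDensity_le_one {n : ℕ} {x : ℝ} (hn : 1 ≤ n) (hx : x ^ 2 ≤ unitBallRadius n ^ 2) :
    |slabDensity n x| ≤ 1 := by
  have hu : x ^ 2 / unitBallRadius n ^ 2 ≤ 1 := div_le_one_of_le₀ hx (sq_nonneg _)
  have hbase : 0 ≤ 1 - x ^ 2 / unitBallRadius n ^ 2 := sub_nonneg.2 hu
  rw [slabDensity, abs_of_nonneg (rpow_nonneg hbase _)]
  exact rpow_le_one hbase (sub_le_self _ (by positivity))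
    (by rw [le_div_iff₀ two_pos]; simpa using hn)

theorem tendsto_slabDensity (x : ℝ) :
    Tendsto (fun n => slabDensity n x) atTop (𝓝 (exp (-(π * exp 1) * x ^ 2))) := by
  have hinv : Tendsto (fun n => (unitBallRadius n ^ 2)⁻¹) atTop (𝓝 0) :=
    tendsto_unitBallRadius_sq_atTop.inv_tendsto_atTop
  have hg : Tendsto (fun n => -(x ^ 2 / unitBallRadius n ^ 2)) atTop (𝓝 0) := by
    simpa [div_eq_mul_inv] using (hinv.const_mul (x ^ 2)).neg
  have hag : Tendsto (fun n : ℕ => ((n : ℝ) - 1) / 2 * -(x ^ 2 / unitBallRadius n ^ 2)) atTop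
      (𝓝 (-(π * exp 1) * x ^ 2)) := by
    have h := ((tendsto_nat_div_unitBallRadius_sq.sub hinv).const_mul (-(x ^ 2 / 2)))
    rw [sub_zero, show -(x ^ 2 / 2) * (2 * π * exp 1) = -(π * exp 1) * x ^ 2 by ring] at h
    refine h.congr fun n => ?_
    ring
  simpa only [slabDensity, sub_eq_add_neg] using tendsto_one_add_rpow_exp_of_tendsto_mul hg hag

theorem tendsto_integral_slab_density_general (d : ℝ) :
    Tendsto
      (fun n : ℕ => ∫ x in (0 : ℝ)..d,
        (1 - x ^ 2 / unitBallRadius n ^ 2) ^ (((n : ℝ) - 1) / 2))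
      atTop (nhds (∫ x in (0 : ℝ)..d, Real.exp (-(π * Real.exp 1) * x ^ 2))) := by
  refine intervalIntegral.tendsto_integral_filter_of_dominated_convergence (fun _ => 1)
    ?_ ?_ intervalIntegrable_const (MeasureTheory.ae_of_all _ fun x _ => tendsto_slabDensity x)
  · filter_upwards [eventually_ge_atTop 1] with n hn
    exact (continuous_slabDensity hn).aestronglyMeasurable
  · filter_upwards [eventually_ge_atTop 1,
      tendsto_unitBallRadius_sq_atTop.eventually_ge_atTop (d ^ 2)] with n hn hR
    refine MeasureTheory.ae_of_all _ fun x hx => abs_slabDensity_le_one hn (le_trans ?_ hR)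
    have := Set.abs_sub_left_of_mem_uIcc (Set.uIoc_subset_uIcc hx)
    simp only [sub_zero] at this
    exact sq_le_sq.2 this

theorem tendsto_integral_slab_density (d : ℝ) (hd : 0 < d) :
    Tendsto
      (fun n : ℕ => ∫ x in (0 : ℝ)..d,
        (1 - x ^ 2 / unitBallRadius n ^ 2) ^ (((n : ℝ) - 1) / 2))
      atTop (nhds (∫ x in (0 : ℝ)..d, Real.exp (-(π * Real.exp 1) * x ^ 2))) :=
  tendsto_integral_slab_density_general d
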